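/- In the two-variable model X → Y with binary X and Y, if the response-function variables R_X and R_Y are independent under the joint distribution P_R, then the interventional probability P(Y = y | do(X = x₁)) equals the conditional probability P(Y = y | X = x₁), provided P(X = x₁) > 0. -/
import Mathlib


open Finset

/-- `gY x r` enumerates the four response functions `Fin 2 → Fin 2`. -/
def gY (x : Fin 2) (r : Fin 4) : Fin 2 :=
  if r = 0 then 0 else if r = 1 then x else if r = 2 then 1 - x else 1

/-- If the response-function variables R_X and R_Y are independent, then the
interventional probability P(Y = y | do(X = x₁)) equals the conditional probability
P(Y = y | X = x₁) = P(x₁, y) / P(x₁), provided P(X = x₁) > 0. -/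
theorem stmt4 (PR : Fin 2 × Fin 4 → ℝ) (PX : Fin 2 → ℝ) (PY : Fin 4 → ℝ)
    (hnn : ∀ r, 0 ≤ PR r) (hsum : ∑ r, PR r = 1)
    (hind : ∀ rX rY, PR (rX, rY) = PX rX * PY rY)
    (x₁ y : Fin 2)
    (hpos : 0 < ∑ r : Fin 2 × Fin 4, PR r * (if r.1 = x₁ then 1 else 0)) :
    (∑ r : Fin 2 × Fin 4, PR r * (if gY x₁ r.2 = y then 1 else 0))
      = (∑ r : Fin 2 × Fin 4,
            PR r * (if r.1 = x₁ then 1 else 0) * (if gY x₁ r.2 = y then 1 else 0))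
        / (∑ r : Fin 2 × Fin 4, PR r * (if r.1 = x₁ then 1 else 0)) := by
  set A := ∑ rY : Fin 4, PY rY * (if gY x₁ rY = y then 1 else 0) with hA
  set S := ∑ rY : Fin 4, PY rY with hS
  set T := ∑ rX : Fin 2, PX rX with hT
  have h1 : (∑ r : Fin 2 × Fin 4, PR r * (if gY x₁ r.2 = y then 1 else 0)) = T * A := by
    rw [hT, hA, Finset.sum_mul_sum, Fintype.sum_prod_type]
    exact Finset.sum_congr rfl fun rX _ => Finset.sum_congr rfl fun rY _ => by
      rw [hind]; ring
  have h2 : (∑ r : Fin 2 × Fin 4, PR r * (if r.1 = x₁ then 1 else 0)) = PX x₁ * S := by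
    rw [hS, Finset.mul_sum, Fintype.sum_prod_type]
    rw [Finset.sum_comm]
    refine Finset.sum_congr rfl fun rY _ => ?_
    rw [show (∑ x : Fin 2, PR (x, rY) * if (x, rY).1 = x₁ then 1 else 0)
        = ∑ x : Fin 2, (if x = x₁ then PX x * PY rY else 0) from
      Finset.sum_congr rfl fun rX _ => by rw [hind]; split <;> simp_all <;> ring]
    rw [Finset.sum_ite_eq' Finset.univ x₁]
    simp
  have h3 : (∑ r : Fin 2 × Fin 4,
      PR r * (if r.1 = x₁ then 1 else 0) * (if gY x₁ r.2 = y then 1 else 0)) = PX x₁ * A := by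
    rw [hA, Finset.mul_sum, Fintype.sum_prod_type]
    rw [Finset.sum_comm]
    refine Finset.sum_congr rfl fun rY _ => ?_
    rw [show (∑ rX : Fin 2, PR (rX, rY) * (if rX = x₁ then 1 else 0) * (if gY x₁ rY = y then 1 else 0))
        = ∑ rX : Fin 2, (if rX = x₁ then PX rX * PY rY * (if gY x₁ rY = y then 1 else 0) else 0) from
      Finset.sum_congr rfl fun rX _ => by rw [hind]; split <;> ring]
    rw [Finset.sum_ite_eq' Finset.univ x₁]
    simp [mul_comm]
  have hTS : T * S = 1 := by
    rw [← hsum, Fintype.sum_prod_type, hT, hS, Finset.sum_mul_sum]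
    exact Finset.sum_congr rfl fun rX _ => Finset.sum_congr rfl fun rY _ => (hind rX rY).symm
  rw [h1, h2, h3]
  rw [h2] at hpos
  have hx : PX x₁ ≠ 0 := fun h => by rw [h, zero_mul] at hpos; exact lt_irrefl 0 hpos
  have hSne : S ≠ 0 := fun h => by rw [h, mul_zero] at hpos; exact lt_irrefl 0 hpos
  rw [mul_div_mul_left _ _ hx]
  field_simp
  linear_combination A * hTS
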